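/- Let f and e be as in the definition of the H^{-1} energy density. For any a ∈ dom(∂f) with a > 0, the set equality { f*(b) : b ∈ ∂f(a) } = ∂e(a) holds, where f* is the convex conjugate of f and ∂ denotes the subdifferential. -/

import Mathlib

/-!
On its domain `D = {f < ∞} ⊆ [0, ∞)` the function `f` is a real convex function `F` (it never
takes the value `-∞`, by convexity and lower semicontinuity at `0`), and `e(y) = y F(y) - 2∫₀ʸ F`.
Fenchel's equality gives `f*(b) = a b - F(a)` for `b ∈ ∂f(a)`, so the claim is that
`b ↦ a b - F(a)` maps `∂f(a)` onto `∂e(a)`. With `p = a b - F(a)` the energy inequality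
`p (y - a) + e(a) ≤ e(y)` reads `2∫ₐʸ F ≤ y F(y) - a F(a) - p (y - a)`. Bounding `∫ F` above by
the trapezoid of the secant and below by an affine minorant turns it into the subgradient
inequality `b (y - a) + F(a) ≤ F(y)` multiplied by `a` or by `y`, both nonnegative. Only the case
`y > a` of the converse needs a limit: the energy inequality at `z ∈ (a, y]` bounds `b` by the
secant slope on `[a, y]` up to an error `O(z - a)`.
-/

open Filter Set Topology MeasureTheory

noncomputable section
open scoped Classical

/-- Convexity for extended-real-valued functions on `ℝ`. -/
def EConvex (f : ℝ → EReal) : Prop :=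
  ∀ x y t : ℝ, 0 ≤ t → t ≤ 1 →
    f (t * x + (1 - t) * y) ≤ (t : EReal) * f x + ((1 - t : ℝ) : EReal) * f y

/-- Legendre–Fenchel (convex) conjugate: `f*(b) = sup_a (a·b − f(a))`. -/
def econj (f : ℝ → EReal) (b : ℝ) : EReal := ⨆ a : ℝ, ((a * b : ℝ) : EReal) - f a

/-- Subdifferential of an extended-real-valued function:
`∂g(x) = { p : p(y − x) + g(x) ≤ g(y) for all y }`. -/
def esubdiff (g : ℝ → EReal) (x : ℝ) : Set ℝ :=
  {p : ℝ | ∀ y : ℝ, ((p * (y - x) : ℝ) : EReal) + g x ≤ g y}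

/-- The `H^{-1}` energy density associated to `f`:
`e(a) = a·f(a) − 2∫₀ᵃ f(s) ds` for `a ∈ dom f`, `+∞` otherwise. -/
def eDen (f : ℝ → EReal) (a : ℝ) : EReal :=
  if f a = ⊤ then ⊤
  else ((a * (f a).toReal - 2 * ∫ s in (0 : ℝ)..a, (f s).toReal : ℝ) : EReal)

namespace ConvexOn

variable {F : ℝ → ℝ} {D : Set ℝ}

theorem intervalIntegrable (hF : ConvexOn ℝ D F) {c d : ℝ} (hc : c ∈ D) (hd : d ∈ D) :
    IntervalIntegrable F volume c d := by
  wlog hcd : c < d generalizing c d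
  · rcases (not_lt.1 hcd).eq_or_lt with rfl | hdc
    · exact IntervalIntegrable.refl
    · exact (this hd hc hdc).symm
  have hIcc : Icc c d ⊆ D := hF.1.ordConnected.out hc hd
  set M := max (F c) (F d)
  have hup : ∀ t ∈ Icc c d, F t ≤ M := fun t ht =>
    hF.le_on_segment hc hd (by rwa [segment_eq_Icc hcd.le])
  -- the reflection of `t` in the midpoint bounds `F t` from below
  have hbound : ∀ t ∈ Icc c d, |F t| ≤ max |2 * F ((c + d) / 2) - M| |M| := by
    intro t ht
    have ht' : c + d - t ∈ Icc c d := ⟨by linarith [ht.2], by linarith [ht.1]⟩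
    have hmid := hF.2 (hIcc ht) (hIcc ht') (by norm_num : (0 : ℝ) ≤ 1 / 2)
      (by norm_num : (0 : ℝ) ≤ 1 / 2) (by norm_num)
    simp only [smul_eq_mul] at hmid
    rw [show 1 / 2 * t + 1 / 2 * (c + d - t) = (c + d) / 2 by ring] at hmid
    exact abs_le_max_abs_abs (by linarith [hup _ ht']) (hup t ht)
  rw [intervalIntegrable_iff_integrableOn_Ioc_of_le hcd.le, integrableOn_Ioc_iff_integrableOn_Ioo]
  have hcont : ContinuousOn F (Ioo c d) :=
    hF.continuousOn_interior.mono (interior_Icc (a := c) (b := d) ▸ interior_mono hIcc)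
  refine IntegrableOn.of_bound measure_Ioo_lt_top
    (hcont.aestronglyMeasurable measurableSet_Ioo) (max |2 * F ((c + d) / 2) - M| |M|) ?_
  filter_upwards [ae_restrict_mem measurableSet_Ioo] with t ht
  exact hbound t (Ioo_subset_Icc_self ht)

theorem le_secant (hF : ConvexOn ℝ D F) {x y t : ℝ} (hx : x ∈ D) (hy : y ∈ D) (hxy : x < y)
    (ht : t ∈ Icc x y) : F t ≤ F x + (F y - F x) / (y - x) * (t - x) := by
  rcases ht.1.eq_or_lt with rfl | hxt
  · simp
  rcases ht.2.eq_or_lt with rfl | hty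
  · field_simp; linarith
  have := hF.secant_mono_aux1 hx hy hxt hty
  have hyx : y - x ≠ 0 := by linarith
  rw [div_mul_eq_mul_div, ← sub_nonneg, show F x + (F y - F x) * (t - x) / (y - x) - F t
    = ((y - t) * F x + (t - x) * F y - (y - x) * F t) / (y - x) by field_simp; ring]
  exact div_nonneg (by linarith) (by linarith)

theorem add_slope_mul_le (hF : ConvexOn ℝ D F) {x a t : ℝ} (hx : x ∈ D) (ht : t ∈ D)
    (hxa : x < a) (hat : a ≤ t) : F a + (F a - F x) / (a - x) * (t - a) ≤ F t := by
  rcases hat.eq_or_lt with rfl | hat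
  · simp
  have := hF.slope_mono_adjacent hx ht hxa hat
  rw [le_div_iff₀ (by linarith)] at this
  linarith

end ConvexOn

theorem integral_affine (α σ a c d : ℝ) :
    ∫ t in c..d, (α + σ * (t - a)) = α * (d - c) + σ * ((d - a) ^ 2 - (c - a) ^ 2) / 2 := by
  rw [intervalIntegral.integral_add intervalIntegrable_const
      ((intervalIntegral.intervalIntegrable_id.sub intervalIntegrable_const).const_mul σ),
    intervalIntegral.integral_const_mul, intervalIntegral.integral_comp_sub_right (fun t => t),
    integral_id, intervalIntegral.integral_const, smul_eq_mul]
  ring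

theorem integral_le_of_le_affine {F : ℝ → ℝ} {α σ a c d : ℝ} (hcd : c ≤ d)
    (hF : IntervalIntegrable F volume c d) (h : ∀ t ∈ Icc c d, F t ≤ α + σ * (t - a)) :
    ∫ t in c..d, F t ≤ α * (d - c) + σ * ((d - a) ^ 2 - (c - a) ^ 2) / 2 :=
  integral_affine α σ a c d ▸ intervalIntegral.integral_mono_on hcd hF
    (Continuous.intervalIntegrable (by fun_prop) c d) h

theorem le_integral_of_affine_le {F : ℝ → ℝ} {α σ a c d : ℝ} (hcd : c ≤ d)
    (hF : IntervalIntegrable F volume c d) (h : ∀ t ∈ Icc c d, α + σ * (t - a) ≤ F t) :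
    α * (d - c) + σ * ((d - a) ^ 2 - (c - a) ^ 2) / 2 ≤ ∫ t in c..d, F t :=
  integral_affine α σ a c d ▸ intervalIntegral.integral_mono_on hcd
    (Continuous.intervalIntegrable (by fun_prop) c d) hF h

theorem ConvexOn.integral_le_secant {F : ℝ → ℝ} {D : Set ℝ} (hF : ConvexOn ℝ D F) {c d : ℝ}
    (hc : c ∈ D) (hd : d ∈ D) (hcd : c ≤ d) :
    ∫ t in c..d, F t ≤ (d - c) * (F c + F d) / 2 := by
  rcases hcd.eq_or_lt with rfl | hcd
  · simp
  have hdc : d - c ≠ 0 := by linarith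
  calc ∫ t in c..d, F t
      ≤ F c * (d - c) + (F d - F c) / (d - c) * ((d - c) ^ 2 - (c - c) ^ 2) / 2 :=
        integral_le_of_le_affine hcd.le (hF.intervalIntegrable hc hd)
          fun t ht => hF.le_secant hc hd hcd ht
    _ = (d - c) * (F c + F d) / 2 := by field_simp; ring

def subgradientsOn (D : Set ℝ) (G : ℝ → ℝ) (a : ℝ) : Set ℝ :=
  {p | ∀ y ∈ D, p * (y - a) + G a ≤ G y}

def energy (F : ℝ → ℝ) (y : ℝ) : ℝ := y * F y - 2 * ∫ s in (0 : ℝ)..y, F s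

namespace ConvexOn

variable {F : ℝ → ℝ} {D : Set ℝ} {a b : ℝ}

theorem energy_sub_energy (hF : ConvexOn ℝ D F) (h0 : 0 ∈ D) (ha : a ∈ D) {y : ℝ} (hy : y ∈ D) :
    energy F y - energy F a = y * F y - a * F a - 2 * ∫ t in a..y, F t := by
  rw [energy, energy, ← intervalIntegral.integral_add_adjacent_intervals
    (hF.intervalIntegrable h0 ha) (hF.intervalIntegrable ha hy)]
  ring

theorem mul_sub_mem_subgradientsOn_energy (hF : ConvexOn ℝ D F) (hD : D ⊆ Ici 0) (h0 : 0 ∈ D)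
    (ha : a ∈ D) (hb : b ∈ subgradientsOn D F a) :
    a * b - F a ∈ subgradientsOn D (energy F) a := by
  intro y hy
  have hdiff := hF.energy_sub_energy h0 ha hy
  have hby := hb y hy
  rcases lt_trichotomy a y with hay | rfl | hya
  · have := hF.integral_le_secant ha hy hay.le
    nlinarith [mul_nonneg (hD ha) (sub_nonneg.2 hby)]
  · simp
  · have htan : F a * (a - y) + b * ((a - a) ^ 2 - (y - a) ^ 2) / 2 ≤ ∫ t in y..a, F t :=
      le_integral_of_affine_le hya.le (hF.intervalIntegrable hy ha) fun t ht => by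
        linarith [hb t (hF.1.ordConnected.out hy ha ht)]
    rw [intervalIntegral.integral_symm] at hdiff
    nlinarith [mul_nonneg (hD hy) (sub_nonneg.2 hby)]

theorem le_of_mul_sub_mem_subgradientsOn_energy (hF : ConvexOn ℝ D F) (h0 : 0 ∈ D) (ha : a ∈ D)
    (ha0 : 0 < a) (hp : a * b - F a ∈ subgradientsOn D (energy F) a) {y : ℝ} (hy : y ∈ D)
    (hay : a < y) : b * (y - a) + F a ≤ F y := by
  set s := (F y - F a) / (y - a)
  set σ := (F a - F 0) / (a - 0)
  -- the energy inequality at `z ∈ (a, y]` gives `a b ≤ a s + O(z - a)`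
  have key : ∀ z ∈ Ioc a y, a * b ≤ a * s + (z - a) * (s - σ) := by
    intro z hz
    have hzD : z ∈ D := hF.1.ordConnected.out ha hy (Ioc_subset_Icc_self hz)
    have hsec : F z ≤ F a + s * (z - a) := hF.le_secant ha hy hay (Ioc_subset_Icc_self hz)
    have htan : F a * (z - a) + σ * ((z - a) ^ 2 - (a - a) ^ 2) / 2 ≤ ∫ t in a..z, F t :=
      le_integral_of_affine_le hz.1.le (hF.intervalIntegrable ha hzD) fun t ht =>
        hF.add_slope_mul_le h0 (hF.1.ordConnected.out ha hzD ht) ha0 ht.1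
    have hpz := hp z hzD
    have hdiff := hF.energy_sub_energy h0 ha hzD
    have hz0 : 0 ≤ z := by linarith [hz.1]
    have : a * b * (z - a) ≤ (a * s + (z - a) * (s - σ)) * (z - a) := by
      nlinarith [mul_le_mul_of_nonneg_left hsec hz0]
    exact le_of_mul_le_mul_right this (sub_pos.2 hz.1)
  have hlim : Tendsto (fun z => a * s + (z - a) * (s - σ)) (𝓝[>] a) (𝓝 (a * s)) :=
    tendsto_nhdsWithin_of_tendsto_nhds (by simpa using (Continuous.tendsto (by fun_prop) a :
      Tendsto (fun z => a * s + (z - a) * (s - σ)) (𝓝 a) _))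
  have hbs : b ≤ s := le_of_mul_le_mul_left
    (ge_of_tendsto hlim (eventually_of_mem (Ioc_mem_nhdsGT hay) key)) ha0
  have := (le_div_iff₀ (sub_pos.2 hay)).1 hbs
  linarith

theorem mem_subgradientsOn_of_mul_sub_mem_energy (hF : ConvexOn ℝ D F) (h0 : 0 ∈ D) (ha : a ∈ D)
    (ha0 : 0 < a) (hp : a * b - F a ∈ subgradientsOn D (energy F) a) :
    b ∈ subgradientsOn D F a := by
  intro y hy
  rcases lt_trichotomy y a with hya | rfl | hay
  · have hsec := hF.integral_le_secant hy ha hya.le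
    have hpy := hp y hy
    have hdiff := hF.energy_sub_energy h0 ha hy
    rw [intervalIntegral.integral_symm] at hdiff
    have : 0 ≤ a * (F y - (b * (y - a) + F a)) := by nlinarith
    linarith [(mul_nonneg_iff_of_pos_left ha0).1 this]
  · simp
  · exact hF.le_of_mul_sub_mem_subgradientsOn_energy h0 ha ha0 hp hy hay

theorem subgradientsOn_energy_eq_image (hF : ConvexOn ℝ D F) (hD : D ⊆ Ici 0) (h0 : 0 ∈ D)
    (ha : a ∈ D) (ha0 : 0 < a) :
    subgradientsOn D (energy F) a = (fun b => a * b - F a) '' subgradientsOn D F a := by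
  ext p
  refine ⟨fun hp => ⟨(p + F a) / a, ?_, ?_⟩, ?_⟩
  · have hp' : a * ((p + F a) / a) - F a = p := by field_simp; ring
    exact hF.mem_subgradientsOn_of_mul_sub_mem_energy h0 ha ha0 (hp'.symm ▸ hp)
  · field_simp; ring
  · rintro ⟨b, hb, rfl⟩
    exact hF.mul_sub_mem_subgradientsOn_energy hD h0 ha hb

end ConvexOn

theorem EConvex.ne_bot {f : ℝ → EReal} (hf : EConvex f) (hlsc : LowerSemicontinuous f)
    {x₀ c : ℝ} (hx₀ : f x₀ = c) (s : ℝ) : f s ≠ ⊥ := by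
  intro hs
  -- convexity forces `f = ⊥` on the open segment from `x₀` to `s`, which accumulates at `x₀`
  have hseg : ∀ t ∈ Ioo (0 : ℝ) 1, f (t * s + (1 - t) * x₀) = ⊥ := by
    intro t ht
    have := hf s x₀ t ht.1.le ht.2.le
    rwa [hs, hx₀, EReal.coe_mul_bot_of_pos ht.1, EReal.bot_add, le_bot_iff] at this
  have hlim : Tendsto (fun t : ℝ => t * s + (1 - t) * x₀) (𝓝[>] 0) (𝓝 x₀) :=
    tendsto_nhdsWithin_of_tendsto_nhds (by simpa using (Continuous.tendsto (by fun_prop) 0 :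
      Tendsto (fun t : ℝ => t * s + (1 - t) * x₀) (𝓝 0) _))
  obtain ⟨t, hpos, ht⟩ :=
    ((hlim.eventually (hlsc x₀ ⊥ (by simp [hx₀]))).and (Ioo_mem_nhdsGT one_pos)).exists
  exact (hseg t ht ▸ hpos).false

theorem EConvex.convexOn_toReal {f : ℝ → EReal} (hf : EConvex f) (hbot : ∀ s, f s ≠ ⊥) :
    ConvexOn ℝ {s | f s ≠ ⊤} (fun s => (f s).toReal) := by
  have key : ∀ x y : ℝ, f x ≠ ⊤ → f y ≠ ⊤ → ∀ t : ℝ, 0 ≤ t → t ≤ 1 →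
      f (t * x + (1 - t) * y) ≤ ((t * (f x).toReal + (1 - t) * (f y).toReal : ℝ) : EReal) := by
    intro x y hx hy t ht0 ht1
    have := hf x y t ht0 ht1
    rwa [← EReal.coe_toReal hx (hbot x), ← EReal.coe_toReal hy (hbot y), ← EReal.coe_mul,
      ← EReal.coe_mul, ← EReal.coe_add] at this
  refine ⟨fun x hx y hy t u ht hu htu => ?_, fun x hx y hy t u ht hu htu => ?_⟩ <;>
    obtain rfl : u = 1 - t := by linarith
  · exact ne_top_of_le_ne_top (EReal.coe_ne_top _) (key x y hx hy t ht (by linarith))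
  · have := EReal.toReal_le_toReal (key x y hx hy t ht (by linarith)) (hbot _)
      (EReal.coe_ne_top _)
    rwa [EReal.toReal_coe] at this

section esubdiff

variable {g : ℝ → EReal} {a : ℝ}

theorem esubdiff_eq_empty_of_eq_top (ha : g a = ⊤) {y : ℝ} (hy : g y ≠ ⊤) : esubdiff g a = ∅ :=
  eq_empty_of_forall_notMem fun _ hp =>
    hy (top_le_iff.1 (EReal.add_top_of_ne_bot (EReal.coe_ne_bot _) ▸ ha ▸ hp y))

theorem esubdiff_eq_subgradientsOn {G : ℝ → ℝ} {D : Set ℝ} (hD : ∀ y ∈ D, g y = G y)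
    (hDc : ∀ y ∉ D, g y = ⊤) (ha : a ∈ D) : esubdiff g a = subgradientsOn D G a := by
  ext p
  refine forall_congr' fun y => ?_
  by_cases hy : y ∈ D
  · rw [hD a ha, hD y hy, ← EReal.coe_add, EReal.coe_le_coe_iff]
    exact ⟨fun h _ => h, fun h => h hy⟩
  · simp [hDc y hy, hy]

theorem econj_eq_of_mem_esubdiff {b c : ℝ} (ha : g a = c) (hb : b ∈ esubdiff g a) :
    econj g b = ((a * b - c : ℝ) : EReal) := by
  refine le_antisymm (iSup_le fun t => ?_) (le_iSup_of_le a (by rw [ha]; rfl))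
  have hbt := hb t
  rw [ha] at hbt
  generalize g t = v at hbt ⊢
  induction v using EReal.rec with
  | bot => exact absurd hbt (by rw [← EReal.coe_add]; exact (EReal.bot_lt_coe _).not_ge)
  | top => simp
  | coe v =>
    rw [← EReal.coe_sub, EReal.coe_le_coe_iff]
    rw [← EReal.coe_add, EReal.coe_le_coe_iff] at hbt
    linarith

end esubdiff

theorem eDen_eq_energy {f : ℝ → EReal} {y : ℝ} (hy : f y ≠ ⊤) :
    eDen f y = energy (fun s => (f s).toReal) y :=
  if_neg hy

theorem statement6_general (f : ℝ → EReal) (hconv : EConvex f)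
    (hlsc : LowerSemicontinuous f) (hf0 : f 0 = 0)
    (hneg : ∀ a : ℝ, a < 0 → f a = ⊤)
    (a : ℝ) (ha : 0 < a) :
    {x : ℝ | ∃ b ∈ esubdiff f a, econj f b = (x : EReal)} = esubdiff (eDen f) a := by
  have hbot : ∀ s, f s ≠ ⊥ := hconv.ne_bot hlsc (hf0.trans EReal.coe_zero.symm)
  set D := {s | f s ≠ ⊤}
  set F := fun s => (f s).toReal
  have h0 : (0 : ℝ) ∈ D := by simp [D, hf0]
  rcases eq_or_ne (f a) ⊤ with hfa | (haD : a ∈ D)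
  · rw [esubdiff_eq_empty_of_eq_top hfa h0,
      esubdiff_eq_empty_of_eq_top (if_pos hfa) (y := 0) (by simp [eDen, hf0])]
    simp
  have hfD : ∀ y ∈ D, f y = F y := fun y hy => (EReal.coe_toReal hy (hbot y)).symm
  have hD : D ⊆ Ici 0 := fun s hs => not_lt.1 fun h => hs (hneg s h)
  calc {x : ℝ | ∃ b ∈ esubdiff f a, econj f b = (x : EReal)}
      = (fun b => a * b - F a) '' esubdiff f a := by
        ext x
        refine exists_congr fun b => and_congr_right fun hb => ?_
        rw [econj_eq_of_mem_esubdiff (hfD a haD) hb, EReal.coe_eq_coe_iff]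
    _ = subgradientsOn D (energy F) a := by
        rw [esubdiff_eq_subgradientsOn hfD (fun y hy => not_not.1 hy) haD,
          (hconv.convexOn_toReal hbot).subgradientsOn_energy_eq_image hD h0 haD ha]
    _ = esubdiff (eDen f) a :=
        (esubdiff_eq_subgradientsOn (fun y hy => eDen_eq_energy hy)
          (fun y hy => if_pos (not_not.1 hy)) haD).symm

/-- For every `a ∈ dom(∂f)` with `a > 0`, one has
`{ f*(b) : b ∈ ∂f(a) } = ∂e(a)` for the `H^{-1}` energy density `e`. -/
theorem statement6 (f : ℝ → EReal) (hconv : EConvex f)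
    (hlsc : LowerSemicontinuous f) (hf0 : f 0 = 0)
    (hneg : ∀ a : ℝ, a < 0 → f a = ⊤)
    (hdom : (interior {a : ℝ | f a ≠ ⊤}).Nonempty)
    (a : ℝ) (ha : 0 < a) (hsub : (esubdiff f a).Nonempty) :
    {x : ℝ | ∃ b ∈ esubdiff f a, econj f b = (x : EReal)} = esubdiff (eDen f) a :=
  statement6_general f hconv hlsc hf0 hneg a ha
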